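/- arXiv:2307.00863 — 3 statements merged into one kernel-verified Lean document; each statement's English description precedes it below -/
import Mathlib

section
/- Let ε > 0, b ∈ [0, 2(e^ε − 1)], and p(r) = ((e^ε − 1 − b)·r² + b·r + 1)/(e^ε + 1). Then the Bernoulli mechanism with success-probability function p satisfies ε-local differential privacy: for all r, r' ∈ [0,1], both p(r) ≤ e^ε · p(r') and 1 − p(r) ≤ e^ε · (1 − p(r')). -/
open Real Set

/-! Writing `E = e^ε`, the numerator `(E - 1 - b) r² + b r + 1` stays in `[1, E]` on `[0, 1]`, so
`p r ∈ [1/(E+1), E/(E+1)]`, the range of binary randomized response. This interval is mapped to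
itself by `x ↦ 1 - x`, and any two of its points differ by a factor of at most `E`. -/

theorem quadratic_mem_Icc_one {E b s : ℝ} (hb : b ∈ Icc 0 (2 * (E - 1))) (hs : s ∈ Icc 0 1) :
    (E - 1 - b) * s ^ 2 + b * s + 1 ∈ Icc 1 E := by
  obtain ⟨hb0, hb2⟩ := hb
  obtain ⟨hs0, hs1⟩ := hs
  -- The two gaps factor as `s (b (1 - s) + (E - 1) s)` and `(1 - s) ((E - 1) (1 + s) - b s)`,
  -- and `b ≤ 2 (E - 1)` bounds the last factor below by `(E - 1) (1 - s)`.
  constructor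
  · nlinarith [mul_nonneg (mul_nonneg hb0 hs0) (sub_nonneg.mpr hs1), mul_nonneg hs0 hs0]
  · nlinarith [mul_nonneg (mul_nonneg (sub_nonneg.mpr hs1) hs0) hs0,
      mul_nonneg (sub_nonneg.mpr hs1) (sub_nonneg.mpr hs1), mul_nonneg (sub_nonneg.mpr hs1) hs0]

section RandomizedResponseRange

variable {E x y : ℝ}

theorem one_sub_mem_Icc_div (hE : 0 ≤ E) (hx : x ∈ Icc (1 / (E + 1)) (E / (E + 1))) :
    1 - x ∈ Icc (1 / (E + 1)) (E / (E + 1)) := by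
  have hE1 : E + 1 ≠ 0 := by positivity
  have h1 : 1 - E / (E + 1) = 1 / (E + 1) := by field_simp; ring
  have h2 : 1 - 1 / (E + 1) = E / (E + 1) := by field_simp; ring
  exact ⟨h1 ▸ by linarith [hx.2], h2 ▸ by linarith [hx.1]⟩

theorem le_mul_of_mem_Icc_div (hE : 0 ≤ E) (hx : x ∈ Icc (1 / (E + 1)) (E / (E + 1)))
    (hy : y ∈ Icc (1 / (E + 1)) (E / (E + 1))) : x ≤ E * y :=
  calc x ≤ E / (E + 1) := hx.2
    _ = E * (1 / (E + 1)) := (mul_one_div E (E + 1)).symm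
    _ ≤ E * y := mul_le_mul_of_nonneg_left hy.1 hE

end RandomizedResponseRange

theorem quadratic_mechanism_ldp_general (ε b : ℝ)
    (hb : b ∈ Icc (0:ℝ) (2 * (exp ε - 1)))
    (p : ℝ → ℝ)
    (hp : ∀ r : ℝ, p r = ((exp ε - 1 - b) * r ^ 2 + b * r + 1) / (exp ε + 1)) :
    ∀ r ∈ Icc (0:ℝ) 1, ∀ r' ∈ Icc (0:ℝ) 1,
      p r ≤ exp ε * p r' ∧ 1 - p r ≤ exp ε * (1 - p r') := by
  have hE : 0 ≤ exp ε := (exp_pos ε).le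
  have hrange : ∀ s ∈ Icc (0:ℝ) 1, p s ∈ Icc (1 / (exp ε + 1)) (exp ε / (exp ε + 1)) := by
    intro s hs
    obtain ⟨hq1, hqE⟩ := quadratic_mem_Icc_one hb hs
    rw [hp s]
    exact ⟨by gcongr, by gcongr⟩
  intro r hr r' hr'
  exact ⟨le_mul_of_mem_Icc_div hE (hrange r hr) (hrange r' hr'),
    le_mul_of_mem_Icc_div hE (one_sub_mem_Icc_div hE (hrange r hr))
      (one_sub_mem_Icc_div hE (hrange r' hr'))⟩

/-- The Bernoulli mechanism with the quadratic probability function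
`p r = ((e^ε-1-b) r² + b r + 1)/(e^ε+1)`, `b ∈ [0, 2(e^ε-1)]`, satisfies
ε-local differential privacy. -/
theorem quadratic_mechanism_ldp (ε b : ℝ) (hε : 0 < ε)
    (hb : b ∈ Icc (0:ℝ) (2 * (exp ε - 1)))
    (p : ℝ → ℝ)
    (hp : ∀ r : ℝ, p r = ((exp ε - 1 - b) * r ^ 2 + b * r + 1) / (exp ε + 1)) :
    ∀ r ∈ Icc (0:ℝ) 1, ∀ r' ∈ Icc (0:ℝ) 1,
      p r ≤ exp ε * p r' ∧ 1 - p r ≤ exp ε * (1 - p r') :=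
  quadratic_mechanism_ldp_general ε b hb p hp
end

section
/- Let ε > 0 and p(r) = e^{ε·r}/(e^ε + 1). Then the Bernoulli mechanism with success-probability function p satisfies ε-local differential privacy: for all r, r' ∈ [0,1], both p(r) ≤ e^ε · p(r') and 1 − p(r) ≤ e^ε · (1 − p(r')). -/
/-!
On `[0, 1]` the numerator `e^{εr}` ranges over `[1, e^ε]`. Hence `e^{εr} ≤ e^ε · e^{εr'}`, and for
the complements `e^ε + 1 - e^{εr} ≤ e^ε` while `e^ε + 1 - e^{εr'} ≥ 1`.
-/

open Real Set

lemma exp_mul_le_exp_mul_exp_mul {ε r r' : ℝ} (hε : 0 ≤ ε) (h : r ≤ r' + 1) :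
    exp (ε * r) ≤ exp ε * exp (ε * r') := by
  rw [← exp_add, exp_le_exp]
  nlinarith

lemma add_one_sub_le_mul_add_one_sub {t a b : ℝ} (ht : 0 ≤ t) (ha : 1 ≤ a) (hb : b ≤ t) :
    t + 1 - a ≤ t * (t + 1 - b) := by
  nlinarith

/-- The Bernoulli mechanism with the exponential probability function
`p r = e^{εr}/(e^ε+1)` satisfies ε-local differential privacy. -/
theorem exponential_mechanism_ldp (ε : ℝ) (hε : 0 < ε)
    (p : ℝ → ℝ) (hp : ∀ r : ℝ, p r = exp (ε * r) / (exp ε + 1)) :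
    ∀ r ∈ Icc (0:ℝ) 1, ∀ r' ∈ Icc (0:ℝ) 1,
      p r ≤ exp ε * p r' ∧ 1 - p r ≤ exp ε * (1 - p r') := by
  intro r hr r' hr'
  have hd : 0 < exp ε + 1 := by positivity
  have hr_le : r ≤ r' + 1 := by linarith [hr.2, hr'.1]
  have one_le_exp_r : 1 ≤ exp (ε * r) := one_le_exp (mul_nonneg hε.le hr.1)
  have exp_r'_le : exp (ε * r') ≤ exp ε := exp_le_exp.2 (mul_le_of_le_one_right hε.le hr'.2)
  simp only [hp, one_sub_div hd.ne', ← mul_div_assoc]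
  exact ⟨div_le_div_of_nonneg_right (exp_mul_le_exp_mul_exp_mul hε.le hr_le) hd.le,
    div_le_div_of_nonneg_right
      (add_one_sub_le_mul_add_one_sub (exp_pos ε).le one_le_exp_r exp_r'_le) hd.le⟩
end

section
/- Let ε > 0, b ∈ [0, 2(e^ε − 1)], and let R₁, Rᵢ be integrable random variables with values in [0,1] almost surely, means μ₁, μᵢ and variances σ₁², σᵢ². Then under the quadratic probability function the gap between privatized means equals E[p(R₁)] − E[p(Rᵢ)] = ({(e^ε − 1 − b)(μ₁ + μᵢ) + b}·(μ₁ − μᵢ) + (e^ε − 1 − b)(σ₁² − σᵢ²))/(e^ε + 1). -/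
/-! Since `p` is a quadratic polynomial, `E[p(R)]` depends only on the first two moments of `R`,
and `E[R²] = σ² + μ²`; the formula is then polynomial algebra. -/

open Real Set MeasureTheory

section

variable {Ω : Type*} [MeasurableSpace Ω] {P : Measure Ω} [IsProbabilityMeasure P] {R : Ω → ℝ}

lemma integral_quadratic (hR : Integrable R P) (hR2 : Integrable (fun ω => R ω ^ 2) P)
    (a b c : ℝ) :
    ∫ ω, (a * R ω ^ 2 + b * R ω + c) ∂P = a * ∫ ω, R ω ^ 2 ∂P + b * ∫ ω, R ω ∂P + c := by
  have hquad : Integrable (fun ω => a * R ω ^ 2 + b * R ω) P :=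
    (hR2.const_mul a).add (hR.const_mul b)
  rw [integral_add hquad (integrable_const c), integral_add (hR2.const_mul a) (hR.const_mul b),
    integral_const_mul, integral_const_mul]
  simp

lemma integral_sub_sq (hR : Integrable R P) (hR2 : Integrable (fun ω => R ω ^ 2) P) (m : ℝ) :
    ∫ ω, (R ω - m) ^ 2 ∂P = ∫ ω, R ω ^ 2 ∂P - 2 * m * ∫ ω, R ω ∂P + m ^ 2 := by
  have h := integral_quadratic hR hR2 1 (-2 * m) (m ^ 2)
  simp only [one_mul] at h
  rw [show (fun ω => (R ω - m) ^ 2) = fun ω => R ω ^ 2 + -2 * m * R ω + m ^ 2 by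
    funext ω; ring, h]
  ring

end

theorem quadratic_privatized_mean_gap_general {Ω : Type*} [MeasurableSpace Ω]
    (P : Measure Ω) [IsProbabilityMeasure P]
    (ε b : ℝ)
    (R₁ Rᵢ : Ω → ℝ) (μ₁ μᵢ σ₁sq σᵢsq : ℝ)
    (hint₁ : Integrable R₁ P) (hintᵢ : Integrable Rᵢ P)
    (hint₁2 : Integrable (fun ω => (R₁ ω) ^ 2) P)
    (hintᵢ2 : Integrable (fun ω => (Rᵢ ω) ^ 2) P)
    (hmean₁ : ∫ ω, R₁ ω ∂P = μ₁) (hmeanᵢ : ∫ ω, Rᵢ ω ∂P = μᵢ)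
    (hvar₁ : ∫ ω, (R₁ ω - μ₁) ^ 2 ∂P = σ₁sq)
    (hvarᵢ : ∫ ω, (Rᵢ ω - μᵢ) ^ 2 ∂P = σᵢsq) :
    (∫ ω, ((exp ε - 1 - b) * (R₁ ω) ^ 2 + b * R₁ ω + 1) / (exp ε + 1) ∂P)
      - (∫ ω, ((exp ε - 1 - b) * (Rᵢ ω) ^ 2 + b * Rᵢ ω + 1) / (exp ε + 1) ∂P)
      = (((exp ε - 1 - b) * (μ₁ + μᵢ) + b) * (μ₁ - μᵢ)
          + (exp ε - 1 - b) * (σ₁sq - σᵢsq)) / (exp ε + 1) := by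
  rw [integral_sub_sq hint₁ hint₁2, hmean₁] at hvar₁
  rw [integral_sub_sq hintᵢ hintᵢ2, hmeanᵢ] at hvarᵢ
  rw [integral_div, integral_div, integral_quadratic hint₁ hint₁2,
    integral_quadratic hintᵢ hintᵢ2, hmean₁, hmeanᵢ, ← hvar₁, ← hvarᵢ]
  ring

/-- Under the quadratic probability function, the gap between privatized means of two
arms with means `μ₁, μᵢ` and variances `σ₁sq, σᵢsq` equals
`({(e^ε-1-b)(μ₁+μᵢ)+b}(μ₁-μᵢ) + (e^ε-1-b)(σ₁sq-σᵢsq))/(e^ε+1)`. -/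
theorem quadratic_privatized_mean_gap {Ω : Type*} [MeasurableSpace Ω]
    (P : Measure Ω) [IsProbabilityMeasure P]
    (ε b : ℝ) (hε : 0 < ε) (hb : b ∈ Icc (0:ℝ) (2 * (exp ε - 1)))
    (R₁ Rᵢ : Ω → ℝ) (μ₁ μᵢ σ₁sq σᵢsq : ℝ)
    (hint₁ : Integrable R₁ P) (hintᵢ : Integrable Rᵢ P)
    (hint₁2 : Integrable (fun ω => (R₁ ω) ^ 2) P)
    (hintᵢ2 : Integrable (fun ω => (Rᵢ ω) ^ 2) P)
    (hbd₁ : ∀ᵐ ω ∂P, R₁ ω ∈ Icc (0:ℝ) 1)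
    (hbdᵢ : ∀ᵐ ω ∂P, Rᵢ ω ∈ Icc (0:ℝ) 1)
    (hmean₁ : ∫ ω, R₁ ω ∂P = μ₁) (hmeanᵢ : ∫ ω, Rᵢ ω ∂P = μᵢ)
    (hvar₁ : ∫ ω, (R₁ ω - μ₁) ^ 2 ∂P = σ₁sq)
    (hvarᵢ : ∫ ω, (Rᵢ ω - μᵢ) ^ 2 ∂P = σᵢsq) :
    (∫ ω, ((exp ε - 1 - b) * (R₁ ω) ^ 2 + b * R₁ ω + 1) / (exp ε + 1) ∂P)
      - (∫ ω, ((exp ε - 1 - b) * (Rᵢ ω) ^ 2 + b * Rᵢ ω + 1) / (exp ε + 1) ∂P)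
      = (((exp ε - 1 - b) * (μ₁ + μᵢ) + b) * (μ₁ - μᵢ)
          + (exp ε - 1 - b) * (σ₁sq - σᵢsq)) / (exp ε + 1) :=
  quadratic_privatized_mean_gap_general P ε b R₁ Rᵢ μ₁ μᵢ σ₁sq σᵢsq hint₁ hintᵢ hint₁2 hintᵢ2 hmean₁
    hmeanᵢ hvar₁ hvarᵢ
end
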